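/- Let P be a countable partial order which is IĒ-homogeneous and which embeds V (∃ a, b, c with c < a, c < b, a ∥ b), Λ (∃ a, b, c with a < c, b < c, a ∥ b) and Z (∃ a, b, c with a < b, c ∥ a, c ∥ b). Then: (i) for all x, y ∈ P with x < y there is z ∈ P with z ∥ x and z ∥ y; (ii) for every finite subset A of P there is z ∈ P with z ∥ a for every a ∈ A. -/

import Mathlib

/-- `x` and `y` are incomparable in a poset. -/
def Incomp {P : Type*} [PartialOrder P] (x y : P) : Prop := ¬ x ≤ y ∧ ¬ y ≤ x

/-- A finite partial isomorphism of a poset `P`. -/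
def IsFinPartIso {P : Type*} [PartialOrder P] (A : Finset P) (f : P → P) : Prop :=
  ∀ a₁ ∈ A, ∀ a₂ ∈ A, (a₁ ≤ a₂ ↔ f a₁ ≤ f a₂)

/-- `P` is IĒ-homogeneous: every finite partial isomorphism extends to a surjective
≤-preserving map `P → P`. -/
def IEbarHomogeneous (P : Type*) [PartialOrder P] : Prop :=
  ∀ (A : Finset P) (f : P → P), IsFinPartIso A f →
    ∃ g : P → P, Monotone g ∧ Function.Surjective g ∧ ∀ a ∈ A, g a = f a

/-!
Incomparability pulls back and bounds push forward along monotone maps, and IĒ-homogeneity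
supplies monotone surjections taking prescribed values on two points of the same order type.
Pulling back the isolated point of `Z` along a surjection sending `x < y` to the chain of `Z`
gives (i). Pushing the top of `Λ` (the bottom of `V`) forward along a surjection sending its
antichain to an incomparable pair shows that `P` is directed (codirected), so a finite set `A`
lies in an interval `[l, m]`, and a point incomparable to `l` and `m` is incomparable to all
of `A`.
-/

open Function OrderDual

section Incomp

variable {P Q : Type*} [PartialOrder P] [PartialOrder Q]

theorem Incomp.symm {x y : P} (h : Incomp x y) : Incomp y x := ⟨h.2, h.1⟩

theorem Incomp.ne {x y : P} (h : Incomp x y) : x ≠ y := fun hxy => h.1 hxy.le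

theorem Incomp.toDual {x y : P} (h : Incomp x y) : Incomp (toDual x) (toDual y) := h.symm

theorem Incomp.of_monotone {g : P → Q} (hg : Monotone g) {x y : P} (h : Incomp (g x) (g y)) :
    Incomp x y :=
  ⟨fun hxy => h.1 (hg hxy), fun hyx => h.2 (hg hyx)⟩

theorem Incomp.of_mem_Icc {z l m a : P} (hl : Incomp z l) (hm : Incomp z m)
    (ha : a ∈ Set.Icc l m) : Incomp z a :=
  ⟨fun hza => hm.1 (hza.trans ha.2), fun haz => hl.2 (ha.1.trans haz)⟩

end Incomp

section PartialIso

variable {P : Type*} [PartialOrder P]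

theorem isFinPartIso_singleton_const (p a : P) : IsFinPartIso {p} (fun _ => a) := by
  simp [IsFinPartIso]

theorem isFinPartIso_pair [DecidableEq P] {x y a b : P} (hne : x ≠ y)
    (h₁ : x ≤ y ↔ a ≤ b) (h₂ : y ≤ x ↔ b ≤ a) :
    IsFinPartIso {x, y} (fun w => if w = x then a else b) := by
  intro p hp q hq
  simp only [Finset.mem_insert, Finset.mem_singleton] at hp hq
  rcases hp with rfl | rfl <;> rcases hq with rfl | rfl <;> simp [hne.symm, h₁, h₂]

end PartialIso

namespace IEbarHomogeneous

variable {P : Type*} [PartialOrder P] (hIE : IEbarHomogeneous P)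
include hIE

theorem dual : IEbarHomogeneous Pᵒᵈ := by
  intro A f hf
  obtain ⟨g, hg_mono, hg_surj, hg_eq⟩ := hIE A f fun a₁ h₁ a₂ h₂ => hf a₂ h₂ a₁ h₁
  exact ⟨g, fun a b hab => hg_mono hab, hg_surj, hg_eq⟩

theorem exists_map_eq (p a : P) : ∃ g : P → P, Monotone g ∧ Surjective g ∧ g p = a := by
  obtain ⟨g, hg_mono, hg_surj, hg_eq⟩ := hIE {p} _ (isFinPartIso_singleton_const p a)
  exact ⟨g, hg_mono, hg_surj, hg_eq p (Finset.mem_singleton_self p)⟩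

theorem exists_map_eq_eq {x y a b : P} (hne : x ≠ y) (h₁ : x ≤ y ↔ a ≤ b)
    (h₂ : y ≤ x ↔ b ≤ a) :
    ∃ g : P → P, Monotone g ∧ Surjective g ∧ g x = a ∧ g y = b := by
  classical
  obtain ⟨g, hg_mono, hg_surj, hg_eq⟩ := hIE {x, y} _ (isFinPartIso_pair hne h₁ h₂)
  refine ⟨g, hg_mono, hg_surj, ?_, ?_⟩
  · simpa using hg_eq x (by simp)
  · simpa [hne.symm] using hg_eq y (by simp)

theorem exists_incomp (hP : ∃ a c : P, Incomp c a) (p : P) : ∃ z, Incomp z p := by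
  obtain ⟨a, c, hca⟩ := hP
  obtain ⟨g, hg_mono, hg_surj, hgp⟩ := hIE.exists_map_eq p a
  obtain ⟨z, rfl⟩ := hg_surj c
  exact ⟨z, Incomp.of_monotone hg_mono (hgp ▸ hca)⟩

theorem exists_incomp_of_lt (hZ : ∃ a b c : P, a < b ∧ Incomp c a ∧ Incomp c b)
    {x y : P} (hxy : x < y) : ∃ z, Incomp z x ∧ Incomp z y := by
  obtain ⟨a, b, c, hab, hca, hcb⟩ := hZ
  obtain ⟨g, hg_mono, hg_surj, hgx, hgy⟩ :=
    hIE.exists_map_eq_eq hxy.ne (iff_of_true hxy.le hab.le) (iff_of_false hxy.not_ge hab.not_ge)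
  obtain ⟨z, rfl⟩ := hg_surj c
  exact ⟨z, Incomp.of_monotone hg_mono (hgx ▸ hca), Incomp.of_monotone hg_mono (hgy ▸ hcb)⟩

theorem exists_incomp_of_le (hZ : ∃ a b c : P, a < b ∧ Incomp c a ∧ Incomp c b)
    {x y : P} (hxy : x ≤ y) : ∃ z, Incomp z x ∧ Incomp z y := by
  rcases hxy.eq_or_lt with rfl | hlt
  · obtain ⟨a, -, c, -, hca, -⟩ := hZ
    obtain ⟨z, hz⟩ := hIE.exists_incomp ⟨a, c, hca⟩ x
    exact ⟨z, hz, hz⟩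
  · exact hIE.exists_incomp_of_lt hZ hlt

theorem isDirectedOrder (hΛ : ∃ a b c : P, a ≤ c ∧ b ≤ c ∧ Incomp a b) : IsDirectedOrder P := by
  refine ⟨fun x y => ?_⟩
  by_cases hxy : x ≤ y
  · exact ⟨y, hxy, le_rfl⟩
  by_cases hyx : y ≤ x
  · exact ⟨x, le_rfl, hyx⟩
  obtain ⟨a, b, c, hac, hbc, hab⟩ := hΛ
  obtain ⟨g, hg_mono, -, rfl, rfl⟩ :=
    hIE.exists_map_eq_eq hab.ne (iff_of_false hab.1 hxy) (iff_of_false hab.2 hyx)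
  exact ⟨g c, hg_mono hac, hg_mono hbc⟩

theorem isCodirectedOrder (hV : ∃ a b c : P, c ≤ a ∧ c ≤ b ∧ Incomp a b) :
    IsCodirectedOrder P := by
  obtain ⟨a, b, c, hca, hcb, hab⟩ := hV
  exact hIE.dual.isDirectedOrder ⟨toDual a, toDual b, toDual c, hca, hcb, hab.toDual⟩

end IEbarHomogeneous

theorem IEbar_VLZ_incomp_points_general (P : Type*) [PartialOrder P]
    (hIE : IEbarHomogeneous P)
    (hV : ∃ a b c : P, c < a ∧ c < b ∧ Incomp a b)
    (hL : ∃ a b c : P, a < c ∧ b < c ∧ Incomp a b)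
    (hZ : ∃ a b c : P, a < b ∧ Incomp c a ∧ Incomp c b) :
    (∀ x y : P, x < y → ∃ z : P, Incomp z x ∧ Incomp z y) ∧
      (∀ A : Finset P, ∃ z : P, ∀ a ∈ A, Incomp z a) := by
  classical
  refine ⟨fun x y => hIE.exists_incomp_of_lt hZ, fun A => ?_⟩
  obtain ⟨a, b, c, hca, hcb, hab⟩ := hV
  obtain ⟨a', b', c', hac', hbc', hab'⟩ := hL
  have : Nonempty P := ⟨c⟩
  have := hIE.isCodirectedOrder ⟨a, b, c, hca.le, hcb.le, hab⟩
  have := hIE.isDirectedOrder ⟨a', b', c', hac'.le, hbc'.le, hab'⟩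
  obtain ⟨m, hm⟩ := A.exists_le
  obtain ⟨l, hl⟩ := (directed_id (r := (· ≥ ·))).finset_le (insert m A)
  obtain ⟨z, hzl, hzm⟩ := hIE.exists_incomp_of_le hZ (hl m (Finset.mem_insert_self m A))
  exact ⟨z, fun x hx => hzl.of_mem_Icc hzm ⟨hl x (Finset.mem_insert_of_mem hx), hm x hx⟩⟩

/-- In a countable IĒ-homogeneous poset embedding `V`, `Λ` and `Z`:
(i) any pair `x < y` has a point incomparable to both;
(ii) every finite subset has a point incomparable to all its members. -/
theorem IEbar_VLZ_incomp_points (P : Type*) [PartialOrder P] [Countable P]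
    (hIE : IEbarHomogeneous P)
    (hV : ∃ a b c : P, c < a ∧ c < b ∧ Incomp a b)
    (hL : ∃ a b c : P, a < c ∧ b < c ∧ Incomp a b)
    (hZ : ∃ a b c : P, a < b ∧ Incomp c a ∧ Incomp c b) :
    (∀ x y : P, x < y → ∃ z : P, Incomp z x ∧ Incomp z y) ∧
      (∀ A : Finset P, ∃ z : P, ∀ a ∈ A, Incomp z a) :=
  IEbar_VLZ_incomp_points_general P hIE hV hL hZ
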